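/- Let r > 2/3, D > 0 and μ ∈ ℝ satisfy 2 + μ = (1/2)·√(2D(r + 1/10))·(q_{f,+}(r) − 2q_{f,−}(r)), and let q_f(ξ) = q_{f,+}(r)·φ(q_{f,+}(r)·√((r + 1/10)/D)·ξ). Then the function ξ ↦ e^{−((μ+2)/D)·ξ}·q_f′(ξ)² is integrable on ℝ, the function χ ↦ e^{−√2·(1/2 − q_{f,−}(r)/q_{f,+}(r))·χ}·φ′(χ)² is integrable on ℝ, and −(1/D)·∫_ℝ e^{−((μ+2)/D)ξ}·q_f′(ξ)² dξ = (q_{f,+}(r)²·(r + 1/10)/D²)·M̂, where M̂ = −(q_{f,+}(r)·D·√2·(q_{f,+}(r) − 2q_{f,−}(r))/(2(μ + 2)))·∫_ℝ e^{−√2(1/2 − q_{f,−}(r)/q_{f,+}(r))χ}·φ′(χ)² dχ; moreover this common value is strictly negative. (This is the Melnikov integral ∂_μQ_f along the heteroclinic front.) -/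

import Mathlib

open MeasureTheory

noncomputable section

/-- The Nagumo front profile `φ(χ) = 1/(1 + exp(−χ/√2))`. -/
def phi (χ : ℝ) : ℝ := 1 / (1 + Real.exp (-χ / Real.sqrt 2))

/-- `q_{f,+}(r) = 1 + √(r/(r + 1/10))`. -/
def qfp (r : ℝ) : ℝ := 1 + Real.sqrt (r / (r + 1/10))

/-- `q_{f,−}(r) = 1 − √(r/(r + 1/10))`. -/
def qfm (r : ℝ) : ℝ := 1 - Real.sqrt (r / (r + 1/10))

/-! The front `q_f` is the logistic profile `φ` rescaled by `a = q_{f,+} √((r + 1/10)/D)`, and the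
matching condition says exactly that the weight `(μ + 2)/D` equals `af · a`. The substitution
`χ = a ξ` therefore turns the `ξ`-integral into `q_{f,+}² a` times the `χ`-integral. The latter
converges because `φ' = φ(1 - φ)/√2 ≤ e^{-|χ|/√2}` while `0 < af < √2` (as `q_{f,+} > 2 q_{f,−}`),
and it is positive, which gives the sign. -/

open Real

lemma phi_pos (χ : ℝ) : 0 < phi χ := by
  unfold phi; positivity

lemma one_sub_phi (χ : ℝ) : 1 - phi χ = exp (-χ / √2) * phi χ := by
  unfold phi
  field_simp
  ring

lemma one_sub_phi_pos (χ : ℝ) : 0 < 1 - phi χ := by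
  rw [one_sub_phi]; exact mul_pos (exp_pos _) (phi_pos χ)

lemma phi_le_exp (χ : ℝ) : phi χ ≤ exp (χ / √2) := by
  calc phi χ ≤ 1 / exp (-χ / √2) :=
        one_div_le_one_div_of_le (exp_pos _) (le_add_of_nonneg_left zero_le_one)
    _ = exp (χ / √2) := by rw [one_div, ← exp_neg, neg_div, neg_neg]

lemma phi_mul_one_sub_phi_le (χ : ℝ) : phi χ * (1 - phi χ) ≤ exp (-|χ| / √2) := by
  have hφ := phi_pos χ
  have hφ' := one_sub_phi_pos χ
  rcases le_or_gt 0 χ with hχ | hχ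
  · rw [abs_of_nonneg hχ]
    calc phi χ * (1 - phi χ) ≤ 1 - phi χ := mul_le_of_le_one_left hφ'.le (by linarith)
      _ = exp (-χ / √2) * phi χ := one_sub_phi χ
      _ ≤ exp (-χ / √2) := mul_le_of_le_one_right (exp_pos _).le (by linarith)
  · rw [abs_of_neg hχ, neg_neg]
    calc phi χ * (1 - phi χ) ≤ phi χ := mul_le_of_le_one_right hφ.le (by linarith)
      _ ≤ exp (χ / √2) := phi_le_exp χ

lemma hasDerivAt_phi (χ : ℝ) : HasDerivAt phi (phi χ * (1 - phi χ) / √2) χ := by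
  have hinv : phi = (fun x => 1 + exp (-x / √2))⁻¹ := funext fun x => one_div _
  have hlin : HasDerivAt (fun x : ℝ => -x / √2) (-1 / √2) χ := by
    simpa using (hasDerivAt_id χ).neg.div_const √2
  have h := (hlin.exp.const_add 1).inv (by positivity : 1 + exp (-χ / √2) ≠ 0)
  refine (hinv ▸ h : HasDerivAt phi _ χ).congr_deriv ?_
  rw [one_sub_phi, phi]
  field_simp

lemma deriv_phi (χ : ℝ) : deriv phi χ = phi χ * (1 - phi χ) / √2 :=
  (hasDerivAt_phi χ).deriv

lemma deriv_phi_pos (χ : ℝ) : 0 < deriv phi χ := by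
  rw [deriv_phi]
  exact div_pos (mul_pos (phi_pos χ) (one_sub_phi_pos χ)) (by positivity)

lemma deriv_phi_sq_le (χ : ℝ) : deriv phi χ ^ 2 ≤ exp (-(√2 * |χ|)) := by
  have h1 : deriv phi χ ≤ phi χ * (1 - phi χ) := by
    rw [deriv_phi]
    exact div_le_self (mul_pos (phi_pos χ) (one_sub_phi_pos χ)).le (one_le_sqrt.2 one_le_two)
  calc deriv phi χ ^ 2 ≤ exp (-|χ| / √2) ^ 2 :=
        pow_le_pow_left₀ (deriv_phi_pos χ).le (h1.trans (phi_mul_one_sub_phi_le χ)) 2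
    _ = exp (-(√2 * |χ|)) := by
        rw [← exp_nat_mul]
        congr 1
        field_simp
        rw [sq_sqrt zero_le_two]
        ring

lemma integrable_exp_neg_mul_abs {b : ℝ} (hb : 0 < b) :
    Integrable fun x : ℝ => exp (-b * |x|) := by
  rw [← integrableOn_univ, ← Set.Iic_union_Ioi (a := 0)]
  refine ((integrableOn_exp_mul_Iic hb 0).congr_fun (fun x hx => ?_) measurableSet_Iic).union
    ((integrableOn_exp_mul_Ioi (neg_neg_of_pos hb) 0).congr_fun (fun x hx => ?_) measurableSet_Ioi)
  · simp [abs_of_nonpos (Set.mem_Iic.1 hx)]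
  · simp [abs_of_pos (Set.mem_Ioi.1 hx)]

lemma integrable_exp_mul_deriv_phi_sq {c : ℝ} (hc : |c| < √2) :
    Integrable fun χ : ℝ => exp (-c * χ) * deriv phi χ ^ 2 := by
  refine (integrable_exp_neg_mul_abs (sub_pos.2 hc)).mono'
    (((measurable_const.mul measurable_id).exp.mul
      ((measurable_deriv phi).pow_const 2)).aestronglyMeasurable) (ae_of_all _ fun χ => ?_)
  rw [norm_of_nonneg (by positivity)]
  calc exp (-c * χ) * deriv phi χ ^ 2 ≤ exp (-c * χ) * exp (-(√2 * |χ|)) :=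
        mul_le_mul_of_nonneg_left (deriv_phi_sq_le χ) (exp_pos _).le
    _ ≤ exp (-(√2 - |c|) * |χ|) := by
        rw [← exp_add]
        refine exp_le_exp.2 ?_
        have : -c * χ ≤ |c| * |χ| := by rw [← abs_mul, neg_mul]; exact neg_le_abs _
        linarith

lemma integral_exp_mul_deriv_phi_sq_pos {c : ℝ} (hc : |c| < √2) :
    0 < ∫ χ : ℝ, exp (-c * χ) * deriv phi χ ^ 2 := by
  refine (integral_pos_iff_support_of_nonneg (fun χ => by positivity)
    (integrable_exp_mul_deriv_phi_sq hc)).2 ?_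
  have : (Function.support fun χ : ℝ => exp (-c * χ) * deriv phi χ ^ 2) = Set.univ :=
    Set.eq_univ_of_forall fun χ => (mul_pos (exp_pos _) (pow_pos (deriv_phi_pos χ) 2)).ne'
  rw [this]
  simp

lemma exp_mul_deriv_front_sq (p a c ξ : ℝ) :
    exp (-(c * a) * ξ) * deriv (fun ξ => p * phi (a * ξ)) ξ ^ 2
      = (p * a) ^ 2 * (exp (-c * (a * ξ)) * deriv phi (a * ξ) ^ 2) := by
  rw [deriv_const_mul_field, deriv_comp_mul_left, smul_eq_mul]
  ring_nf

lemma integrable_exp_mul_deriv_front_sq (p : ℝ) {a c : ℝ} (hc : |c| < √2) (ha : a ≠ 0) :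
    Integrable fun ξ => exp (-(c * a) * ξ) * deriv (fun ξ => p * phi (a * ξ)) ξ ^ 2 := by
  simp_rw [exp_mul_deriv_front_sq]
  exact ((integrable_exp_mul_deriv_phi_sq hc).comp_mul_left' ha).const_mul _

lemma integral_exp_mul_deriv_front_sq (p c : ℝ) {a : ℝ} (ha : 0 < a) :
    ∫ ξ, exp (-(c * a) * ξ) * deriv (fun ξ => p * phi (a * ξ)) ξ ^ 2
      = p ^ 2 * a * ∫ χ, exp (-c * χ) * deriv phi χ ^ 2 := by
  simp_rw [exp_mul_deriv_front_sq]
  rw [integral_const_mul, Measure.integral_comp_mul_left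
    (fun χ => exp (-c * χ) * deriv phi χ ^ 2) a, abs_of_pos (inv_pos.2 ha), smul_eq_mul]
  field_simp

lemma one_le_qfp (r : ℝ) : 1 ≤ qfp r :=
  le_add_of_nonneg_right (sqrt_nonneg _)

lemma qfm_nonneg {r : ℝ} (hr : 0 ≤ r) : 0 ≤ qfm r :=
  sub_nonneg.2 (sqrt_le_one.2 (div_le_one_of_le₀ (by linarith) (by linarith)))

lemma qfp_sub_two_mul_qfm_pos {r : ℝ} (hr : 1/80 < r) : 0 < qfp r - 2 * qfm r := by
  have : 1/3 < √(r / (r + 1/10)) :=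
    (lt_sqrt (by norm_num)).2 (by rw [lt_div_iff₀ (by linarith)]; linarith)
  unfold qfp qfm
  linarith

lemma half_sub_qfm_div_qfp (r : ℝ) :
    1/2 - qfm r / qfp r = (qfp r - 2 * qfm r) / (2 * qfp r) := by
  have := one_le_qfp r
  field_simp

lemma half_sub_qfm_div_qfp_pos {r : ℝ} (hr : 1/80 < r) : 0 < 1/2 - qfm r / qfp r := by
  rw [half_sub_qfm_div_qfp]
  exact div_pos (qfp_sub_two_mul_qfm_pos hr) (by linarith [one_le_qfp r])

lemma half_sub_qfm_div_qfp_lt_one {r : ℝ} (hr : 0 ≤ r) : 1/2 - qfm r / qfp r < 1 := by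
  linarith [div_nonneg (qfm_nonneg hr) (zero_le_one.trans (one_le_qfp r))]

lemma add_two_div_eq_of_matching {r D μ : ℝ} (hD : 0 < D)
    (hmatch : 2 + μ = (1/2) * √(2*D*(r + 1/10)) * (qfp r - 2 * qfm r)) :
    (μ + 2) / D = √2 * (1/2 - qfm r / qfp r) * (qfp r * √((r + 1/10) / D)) := by
  have := one_le_qfp r
  rw [half_sub_qfm_div_qfp, add_comm, hmatch, sqrt_div' _ hD.le,
    sqrt_mul (by positivity), sqrt_mul zero_le_two]
  have hD' := sq_sqrt hD.le
  have : 0 < √D := sqrt_pos.2 hD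
  field_simp
  rw [hD']
  ring

theorem stmt13 (r D μ : ℝ) (hr : 2/3 < r) (hD : 0 < D)
    (hmatch : 2 + μ = (1/2) * Real.sqrt (2*D*(r + 1/10)) * (qfp r - 2 * qfm r)) :
    let qf : ℝ → ℝ := fun ξ => qfp r * phi (qfp r * Real.sqrt ((r + 1/10) / D) * ξ)
    let af : ℝ := Real.sqrt 2 * (1/2 - qfm r / qfp r)
    let Mhat : ℝ := -(qfp r * D * Real.sqrt 2 * (qfp r - 2 * qfm r) / (2 * (μ + 2))) *
      ∫ χ : ℝ, Real.exp (-af * χ) * (deriv phi χ)^2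
    Integrable (fun ξ : ℝ => Real.exp (-((μ + 2)/D) * ξ) * (deriv qf ξ)^2) ∧
    Integrable (fun χ : ℝ => Real.exp (-af * χ) * (deriv phi χ)^2) ∧
    -(1/D) * ∫ ξ : ℝ, Real.exp (-((μ + 2)/D) * ξ) * (deriv qf ξ)^2
      = ((qfp r)^2 * (r + 1/10) / D^2) * Mhat ∧
    ((qfp r)^2 * (r + 1/10) / D^2) * Mhat < 0 := by
  intro qf af Mhat
  have hp : 0 < qfp r := one_pos.trans_le (one_le_qfp r)
  set a := qfp r * √((r + 1/10) / D) with ha_def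
  have ha : 0 < a := mul_pos hp (sqrt_pos.2 (by positivity))
  have hrate : (μ + 2) / D = af * a := add_two_div_eq_of_matching hD hmatch
  have haf : 0 < af := mul_pos (by positivity) (half_sub_qfm_div_qfp_pos (by linarith))
  have haf_lt : |af| < √2 := by
    rw [abs_of_pos haf]
    exact mul_lt_of_lt_one_right (by positivity) (half_sub_qfm_div_qfp_lt_one (by linarith))
  have hI := integral_exp_mul_deriv_front_sq (qfp r) af ha
  have hIpos := integral_exp_mul_deriv_phi_sq_pos haf_lt
  have hvalue : -(1/D) * ∫ ξ : ℝ, exp (-((μ + 2)/D) * ξ) * (deriv qf ξ)^2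
      = ((qfp r)^2 * (r + 1/10) / D^2) * Mhat := by
    have ha_sq : a ^ 2 * D = qfp r ^ 2 * (r + 1/10) := by
      rw [ha_def, mul_pow, sq_sqrt (by positivity)]; field_simp
    have hμ : μ + 2 = af * a * D := by rw [← hrate]; field_simp
    have haf_eq : √2 * (qfp r - 2 * qfm r) = af * (2 * qfp r) := by
      simp only [af, half_sub_qfm_div_qfp]; field_simp
    rw [hrate, hI]
    simp only [Mhat, hμ, mul_assoc (qfp r * D), haf_eq]
    generalize (∫ χ : ℝ, exp (-af * χ) * deriv phi χ ^ 2) = I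
    field_simp
    linear_combination (-10 * I) * ha_sq
  refine ⟨hrate ▸ integrable_exp_mul_deriv_front_sq (qfp r) haf_lt ha.ne',
    integrable_exp_mul_deriv_phi_sq haf_lt, hvalue, ?_⟩
  rw [← hvalue, hrate, hI]
  exact mul_neg_of_neg_of_pos (neg_neg_of_pos (by positivity)) (mul_pos (by positivity) hIpos)
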